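/- If the pattern p occurs in T_i, then there is a unique index x such that p occurs in the layer of size sw_x but not in the layer of size sw_{x-1} (with sw₀ = 0, layer of size 0 being empty), and for this x, Bitlen(rightmost_i(p)) = b_x. -/

import Mathlib

/-!
Let `m` be the rightmost offset of `p`. Since layers are nested, `p` occurs in the layer of
size `k` iff `m ≤ k`, and as `sw x` is the largest position whose bit length is at most `b x`,
`m ≤ sw x` iff `Bitlen m ≤ b x`. Hence the layer in which `p` first appears is the unique `x`
with `b x = Bitlen m`, which exists because `b` enumerates the bit lengths on `[1, i]`.
-/

/-- `w` occurs in `T` starting at (0-based) position `y`. -/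
def occursAt {σ : Type*} (T w : List σ) (y : ℕ) : Prop :=
  y + w.length ≤ T.length ∧ (T.drop y).take w.length = w

theorem exists_le_iff_sInf_le {α : Type*} {P : α → Prop} {f : α → ℕ} (h : ∃ a, P a) (k : ℕ) :
    (∃ a, P a ∧ f a ≤ k) ↔ sInf {o | ∃ a, P a ∧ o = f a} ≤ k := by
  set S : Set ℕ := {o | ∃ a, P a ∧ o = f a}
  constructor
  · rintro ⟨a, ha, hk⟩
    exact (Nat.sInf_le (show f a ∈ S from ⟨a, ha, rfl⟩)).trans hk
  · intro hk
    obtain ⟨a, ha⟩ := h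
    obtain ⟨a', ha', hmin⟩ := Nat.sInf_mem (show S.Nonempty from ⟨f a, a, ha, rfl⟩)
    exact ⟨a', ha', hmin ▸ hk⟩

theorem le_iff_apply_le_of_isGreatest {f : ℕ → ℕ} {i c w m : ℕ}
    (hf : MonotoneOn f (Set.Icc 1 i)) (hw : IsGreatest {j | j ≤ i ∧ f j ≤ c} w)
    (hm : m ∈ Set.Icc 1 i) : m ≤ w ↔ f m ≤ c :=
  ⟨fun h => (hf hm ⟨hm.1.trans h, hw.1.1⟩ h).trans hw.1.2, fun h => hw.2 ⟨hm.2, h⟩⟩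

theorem StrictMonoOn.threshold_crossing_iff_eq {A : ℕ → Prop} {b : ℕ → ℕ} {s x₀ : ℕ}
    (hb : StrictMonoOn b (Set.Icc 1 s)) (hx₀ : x₀ ∈ Set.Icc 1 s) (hA0 : ¬ A 0)
    (hA : ∀ x ∈ Set.Icc 1 s, A x ↔ b x₀ ≤ b x) (x : ℕ) :
    ((1 ≤ x ∧ x ≤ s) ∧ A x ∧ ¬ A (x - 1)) ↔ x = x₀ := by
  have hAle : ∀ x ∈ Set.Icc 1 s, A x ↔ x₀ ≤ x := fun x hx =>
    (hA x hx).trans (hb.le_iff_le hx₀ hx)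
  have hApred : ∀ x ∈ Set.Icc 1 s, A (x - 1) ↔ x₀ < x := by
    rintro x ⟨hx1, hxs⟩
    rcases Nat.lt_or_ge 1 x with h | h
    · rw [hAle (x - 1) ⟨by omega, by omega⟩]
      omega
    · obtain rfl : x = 1 := by omega
      exact iff_of_false hA0 (not_lt.2 hx₀.1)
  constructor
  · rintro ⟨hx, hAx, hAx'⟩
    have := (hAle x hx).1 hAx
    have := (hApred x hx).not.1 hAx'
    omega
  · rintro rfl
    exact ⟨hx₀, (hAle x hx₀).2 le_rfl, fun h => lt_irrefl x ((hApred x hx₀).1 h)⟩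

theorem stmt10_general {σ : Type*} (T : List σ) (i s : ℕ) (Bitlen b sw : ℕ → ℕ) (p : List σ)
    (hmono : ∀ x y, 1 ≤ x → x ≤ y → y ≤ i → Bitlen x ≤ Bitlen y)
    (hb : StrictMonoOn b (Set.Icc 1 s))
    (himg : ∀ v, (∃ j, 1 ≤ j ∧ j ≤ i ∧ Bitlen j = v) ↔ (∃ x, 1 ≤ x ∧ x ≤ s ∧ b x = v))
    (hsw0 : sw 0 = 0)
    (hsw : ∀ x, 1 ≤ x → x ≤ s →
      1 ≤ sw x ∧ sw x ≤ i ∧ Bitlen (sw x) ≤ b x ∧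
      ∀ j, j ≤ i → Bitlen j ≤ b x → j ≤ sw x)
    (hocc : ∃ y, occursAt (T.take i) p y)
    (hoffpos : ∀ y, occursAt (T.take i) p y → 1 ≤ i - y - 1) :
    (∃! x, (1 ≤ x ∧ x ≤ s) ∧
        (∃ y, occursAt (T.take i) p y ∧ i - y - 1 ≤ sw x) ∧
        ¬ (∃ y, occursAt (T.take i) p y ∧ i - y - 1 ≤ sw (x - 1))) ∧
    ∀ x, 1 ≤ x → x ≤ s →
      (∃ y, occursAt (T.take i) p y ∧ i - y - 1 ≤ sw x) →
      ¬ (∃ y, occursAt (T.take i) p y ∧ i - y - 1 ≤ sw (x - 1)) →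
      Bitlen (sInf {o | ∃ y, occursAt (T.take i) p y ∧ o = i - y - 1}) = b x := by
  set m := sInf {o | ∃ y, occursAt (T.take i) p y ∧ o = i - y - 1}
  have hlayer := exists_le_iff_sInf_le (f := fun y => i - y - 1) hocc
  have hnot0 : ¬ ∃ y, occursAt (T.take i) p y ∧ i - y - 1 ≤ sw 0 := fun ⟨y, hy, h⟩ => by
    have := hoffpos y hy
    omega
  have hm : m ∈ Set.Icc 1 i := by
    obtain ⟨y, hy⟩ := hocc
    exact ⟨Nat.one_le_iff_ne_zero.2 fun h => hnot0 ((hlayer _).2 (by omega)),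
      (hlayer i).1 ⟨y, hy, by omega⟩⟩
  obtain ⟨x₀, hx₀1, hx₀s, hbx₀⟩ := (himg (Bitlen m)).1 ⟨m, hm.1, hm.2, rfl⟩
  have hcross := hb.threshold_crossing_iff_eq
      (A := fun x => ∃ y, occursAt (T.take i) p y ∧ i - y - 1 ≤ sw x)
      ⟨hx₀1, hx₀s⟩ (hsw0 ▸ hnot0) fun x ⟨hx1, hxs⟩ => by
    obtain ⟨-, hswi, hswb, hswmax⟩ := hsw x hx1 hxs
    rw [hlayer, hbx₀]
    exact le_iff_apply_le_of_isGreatest (fun x hx y hy hxy => hmono x y hx.1 hxy hy.2)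
      ⟨⟨hswi, hswb⟩, fun j hj => hswmax j hj.1 hj.2⟩ hm
  refine ⟨⟨x₀, (hcross x₀).2 rfl, fun x hx => (hcross x).1 hx⟩, ?_⟩
  intro x hx1 hxs hin hout
  rw [(hcross x).1 ⟨⟨hx1, hxs⟩, hin, hout⟩, hbx₀]

/-- If the pattern `p` occurs in `T_i`, there is a unique index `x` such that `p` occurs in
the layer of size `sw x` but not in the layer of size `sw (x-1)` (with `sw 0 = 0`, the layer
of size 0 being empty), and for this `x`, `Bitlen (rightmost_i p) = b x`. -/
theorem stmt10 {σ : Type*} (T : List σ) (i s : ℕ) (Bitlen b sw : ℕ → ℕ) (p : List σ)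
    (hs : 1 ≤ s)
    (hmono : ∀ x y, 1 ≤ x → x ≤ y → y ≤ i → Bitlen x ≤ Bitlen y)
    (hb : StrictMonoOn b (Set.Icc 1 s))
    (himg : ∀ v, (∃ j, 1 ≤ j ∧ j ≤ i ∧ Bitlen j = v) ↔ (∃ x, 1 ≤ x ∧ x ≤ s ∧ b x = v))
    (hsw0 : sw 0 = 0)
    (hsw : ∀ x, 1 ≤ x → x ≤ s →
      1 ≤ sw x ∧ sw x ≤ i ∧ Bitlen (sw x) ≤ b x ∧
      ∀ j, j ≤ i → Bitlen j ≤ b x → j ≤ sw x)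
    (hswtop : sw s = i)
    (hocc : ∃ y, occursAt (T.take i) p y)
    (hoffpos : ∀ y, occursAt (T.take i) p y → 1 ≤ i - y - 1) :
    (∃! x, (1 ≤ x ∧ x ≤ s) ∧
        (∃ y, occursAt (T.take i) p y ∧ i - y - 1 ≤ sw x) ∧
        ¬ (∃ y, occursAt (T.take i) p y ∧ i - y - 1 ≤ sw (x - 1))) ∧
    ∀ x, 1 ≤ x → x ≤ s →
      (∃ y, occursAt (T.take i) p y ∧ i - y - 1 ≤ sw x) →
      ¬ (∃ y, occursAt (T.take i) p y ∧ i - y - 1 ≤ sw (x - 1)) →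
      Bitlen (sInf {o | ∃ y, occursAt (T.take i) p y ∧ o = i - y - 1}) = b x :=
  stmt10_general T i s Bitlen b sw p hmono hb himg hsw0 hsw hocc hoffpos
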